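/- Let m be a positive integer and let α be a complex number. Then (-1)^m · π^{2m+2}/(4·(2m)!) · ( (α-1)^{2m} + (α+1)^{2m} - 2α^{2m} ) + Σ_{k=1}^{m} (-1)^k ( (α-1)^{2k-1} - (α+1)^{2k-1} ) · π^{2k}/(2k-1)! · λ(2m-2k+2) = 0. -/

import Mathlib

open Real Finset

/-- The Dirichlet lambda function at a natural-number argument `j`:
`λ(j) = ∑_{n=0}^∞ 1/(2n+1)^j`. -/
noncomputable def dirichletLambda (j : ℕ) : ℝ := ∑' n : ℕ, 1 / (2 * (n : ℝ) + 1) ^ j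

/-!
Euler's evaluation of `ζ(2j)` gives `λ(2j) = (1 - 2^{-2j}) ζ(2j) = (-1)^j π^{2j} G_{2j} / (4 (2j)!)`,
where `G_n = 2 (1 - 2^n) B_n` are the Genocchi numbers, with exponential generating function
`2t / (e^t + 1)`. After factoring out `-(-1)^m π^{2m+2} / 4`, the claim is the coefficient of
`t^{2m+1}` in the power series identity
`(e^{(α-1)t} - e^{(α+1)t}) · 2t / (e^t + 1) = -2t (e^{αt} - e^{(α-1)t})`.
Of the odd Genocchi numbers only `G_1 = 1` is nonzero; it produces the term
`(α-1)^{2m} - (α+1)^{2m}`.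
-/

open Nat PowerSeries

theorem Finset.sum_range_two_mul {M : Type*} [AddCommMonoid M] (f : ℕ → M) (n : ℕ) :
    ∑ i ∈ range (2 * n), f i = ∑ i ∈ range n, f (2 * i) + ∑ i ∈ range n, f (2 * i + 1) := by
  induction n with
  | zero => simp
  | succ n ih =>
    rw [mul_add_one, sum_range_succ, sum_range_succ, ih, sum_range_succ, sum_range_succ]
    abel

def genocchi (n : ℕ) : ℚ := 2 * (1 - 2 ^ n) * bernoulli n

@[simp] theorem genocchi_zero : genocchi 0 = 0 := by simp [genocchi]

@[simp] theorem genocchi_one : genocchi 1 = 1 := by norm_num [genocchi, bernoulli_one]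

theorem genocchi_eq_zero_of_odd {n : ℕ} (hn : Odd n) (hn1 : n ≠ 1) : genocchi n = 0 := by
  rw [genocchi, bernoulli_eq_zero_of_odd hn (by obtain ⟨k, rfl⟩ := hn; omega), mul_zero]

section GenocchiPowerSeries

variable (K : Type*) [Field K] [CharZero K]

noncomputable def genocchiPowerSeries : K⟦X⟧ :=
  PowerSeries.mk fun n => ((genocchi n / n ! : ℚ) : K)

theorem genocchiPowerSeries_eq :
    genocchiPowerSeries K = C 2 * (bernoulliPowerSeries K - rescale 2 (bernoulliPowerSeries K)) := by
  ext n
  simp only [genocchiPowerSeries, bernoulliPowerSeries, genocchi, coeff_mk, coeff_C_mul, map_sub,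
    coeff_rescale, eq_ratCast]
  push_cast
  ring

theorem genocchiPowerSeries_mul_exp_add_one :
    genocchiPowerSeries K * (exp K + 1) = C 2 * X := by
  have hexp : exp K - 1 ≠ 0 := fun h => by simpa using congrArg (coeff 1) h
  have hsq : exp K ^ 2 = rescale 2 (exp K) := by
    exact_mod_cast exp_pow_eq_rescale_exp (A := K) 2
  refine mul_right_cancel₀ hexp ?_
  calc genocchiPowerSeries K * (exp K + 1) * (exp K - 1)
      = C 2 * (bernoulliPowerSeries K * (exp K - 1) * (exp K + 1)
          - rescale 2 (bernoulliPowerSeries K * (exp K - 1))) := by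
        rw [genocchiPowerSeries_eq, map_mul, map_sub, map_one, ← hsq]; ring
    _ = C 2 * X * (exp K - 1) := by
        rw [bernoulliPowerSeries_mul_exp_sub_one, rescale_X, map_ofNat]; ring

variable {K}

theorem PowerSeries.coeff_rescale_exp (a : K) (n : ℕ) :
    coeff n (rescale a (exp K)) = a ^ n / n ! := by
  simp [coeff_rescale, coeff_exp, div_eq_mul_inv]

theorem sub_rescale_exp_mul_genocchiPowerSeries (α : K) :
    (rescale (α - 1) (exp K) - rescale (α + 1) (exp K)) * genocchiPowerSeries K
      = C (-2) * (X * (rescale α (exp K) - rescale (α - 1) (exp K))) := by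
  have hshift (a : K) : rescale a (exp K) * exp K = rescale (a + 1) (exp K) := by
    simpa [rescale_one] using exp_mul_exp_eq_exp_add a (1 : K)
  have hα : rescale (α + 1) (exp K) = rescale (α - 1) (exp K) * exp K * exp K := by
    rw [hshift, hshift]; ring_nf
  calc _ = -(rescale (α - 1) (exp K) * (exp K - 1)) * (genocchiPowerSeries K * (exp K + 1)) := by
        rw [hα]; ring
    _ = _ := by
        rw [genocchiPowerSeries_mul_exp_add_one, mul_sub, hshift, sub_add_cancel, map_neg]; ring

theorem sum_range_sub_pow_mul_genocchi (α : K) (m : ℕ) :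
    ∑ i ∈ range m, ((α - 1) ^ (2 * i + 1) - (α + 1) ^ (2 * i + 1)) / (2 * i + 1)! *
        ((genocchi (2 * (m - i)) / (2 * (m - i))! : ℚ) : K)
      = ((α - 1) ^ (2 * m) + (α + 1) ^ (2 * m) - 2 * α ^ (2 * m)) / (2 * m)! := by
  set F := rescale (α - 1) (exp K) - rescale (α + 1) (exp K)
  have hF (n : ℕ) : coeff n F = ((α - 1) ^ n - (α + 1) ^ n) / n ! := by
    simp only [F, map_sub, coeff_rescale_exp, sub_div]
  have hG (n : ℕ) : coeff n (genocchiPowerSeries K) = ((genocchi n / n ! : ℚ) : K) :=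
    coeff_mk _ _
  have heven : ∀ i ∈ range m,
      coeff (2 * i) F * coeff (2 * m + 1 - 2 * i) (genocchiPowerSeries K) = 0 := by
    intro i hi
    rw [hG, genocchi_eq_zero_of_odd ⟨m - i, by grind⟩ (by grind)]
    simp
  have hodd : ∀ i ∈ range m,
      coeff (2 * i + 1) F * coeff (2 * m + 1 - (2 * i + 1)) (genocchiPowerSeries K)
        = ((α - 1) ^ (2 * i + 1) - (α + 1) ^ (2 * i + 1)) / (2 * i + 1)! *
          ((genocchi (2 * (m - i)) / (2 * (m - i))! : ℚ) : K) := by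
    intro i hi
    rw [hF, hG, show 2 * m + 1 - (2 * i + 1) = 2 * (m - i) by omega]
  have hlhs : coeff (2 * m + 1) (F * genocchiPowerSeries K)
      = ((α - 1) ^ (2 * m) - (α + 1) ^ (2 * m)) / (2 * m)! + ∑ i ∈ range m,
        ((α - 1) ^ (2 * i + 1) - (α + 1) ^ (2 * i + 1)) / (2 * i + 1)! *
          ((genocchi (2 * (m - i)) / (2 * (m - i))! : ℚ) : K) := by
    rw [coeff_mul, Nat.sum_antidiagonal_eq_sum_range_succ (fun i j => coeff i F * coeff j _),
      show (2 * m + 1).succ = 2 * (m + 1) by omega, sum_range_two_mul, sum_range_succ,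
      sum_range_succ, sum_eq_zero heven, sum_congr rfl hodd, hF, hG, hG,
      show 2 * m + 1 - 2 * m = 1 by omega, Nat.sub_self]
    simp
  have hrhs : coeff (2 * m + 1) (C (-2) * (X * (rescale α (exp K) - rescale (α - 1) (exp K))))
      = -2 * ((α ^ (2 * m) - (α - 1) ^ (2 * m)) / (2 * m)!) := by
    rw [coeff_C_mul, coeff_succ_X_mul, map_sub, coeff_rescale_exp, coeff_rescale_exp, sub_div]
  rw [sub_rescale_exp_mul_genocchiPowerSeries, hrhs] at hlhs
  linear_combination -hlhs

end GenocchiPowerSeries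

theorem dirichletLambda_eq_mul_tsum {k : ℕ} (hk : 1 < k) :
    dirichletLambda k = (1 - 1 / 2 ^ k) * ∑' n : ℕ, 1 / (n : ℝ) ^ k := by
  have hs : Summable fun n : ℕ => 1 / (n : ℝ) ^ k := Real.summable_one_div_nat_pow.mpr hk
  have hsplit := tsum_even_add_odd (f := fun n : ℕ => 1 / (n : ℝ) ^ k)
    (hs.comp_injective (mul_right_injective₀ two_ne_zero))
    (hs.comp_injective fun a b h => by simpa using h)
  have heven : ∑' n : ℕ, 1 / ((2 * n : ℕ) : ℝ) ^ k = 1 / 2 ^ k * ∑' n : ℕ, 1 / (n : ℝ) ^ k := by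
    rw [← tsum_mul_left]
    congr 1 with n
    push_cast
    rw [mul_pow, one_div_mul_one_div]
  have hodd : ∑' n : ℕ, 1 / ((2 * n + 1 : ℕ) : ℝ) ^ k = dirichletLambda k := by
    simp only [dirichletLambda, Nat.cast_add, Nat.cast_mul, Nat.cast_ofNat, Nat.cast_one]
  rw [heven, hodd] at hsplit
  linear_combination hsplit

theorem dirichletLambda_two_mul {j : ℕ} (hj : j ≠ 0) :
    dirichletLambda (2 * j) = (-1) ^ j * π ^ (2 * j) * genocchi (2 * j) / (4 * (2 * j)!) := by
  rw [dirichletLambda_eq_mul_tsum (by omega), (hasSum_zeta_nat hj).tsum_eq, genocchi]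
  push_cast
  rw [← mul_pow_sub_one (by omega : 2 * j ≠ 0) (2 : ℝ)]
  field_simp
  ring

theorem lambda_recurrence_family_second_even_general (m : ℕ) (α : ℂ) :
    (-1 : ℂ) ^ m * ((π : ℂ) ^ (2 * m + 2) / (4 * (Nat.factorial (2 * m)))) *
        ((α - 1) ^ (2 * m) + (α + 1) ^ (2 * m) - 2 * α ^ (2 * m)) +
      ∑ k ∈ Finset.Icc 1 m,
        (-1 : ℂ) ^ k * ((α - 1) ^ (2 * k - 1) - (α + 1) ^ (2 * k - 1)) *
          ((π : ℂ) ^ (2 * k) / (Nat.factorial (2 * k - 1))) *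
            (dirichletLambda (2 * m - 2 * k + 2) : ℂ) = 0 := by
  have hterm : ∀ i ∈ range m,
      (-1 : ℂ) ^ (1 + i) * ((α - 1) ^ (2 * (1 + i) - 1) - (α + 1) ^ (2 * (1 + i) - 1)) *
          ((π : ℂ) ^ (2 * (1 + i)) / (Nat.factorial (2 * (1 + i) - 1))) *
            (dirichletLambda (2 * m - 2 * (1 + i) + 2) : ℂ)
        = -((-1 : ℂ) ^ m * π ^ (2 * m + 2) / 4) *
          (((α - 1) ^ (2 * i + 1) - (α + 1) ^ (2 * i + 1)) / (2 * i + 1)! *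
            ((genocchi (2 * (m - i)) / (2 * (m - i))! : ℚ) : ℂ)) := by
    intro i hi
    obtain ⟨t, rfl⟩ := Nat.exists_eq_add_of_lt (mem_range.mp hi)
    rw [show 2 * (i + t + 1) - 2 * (1 + i) + 2 = 2 * (t + 1) by omega,
      dirichletLambda_two_mul (j := t + 1) (by omega), show 2 * (1 + i) - 1 = 2 * i + 1 by omega,
      show i + t + 1 - i = t + 1 by omega]
    push_cast
    ring
  rw [← Ico_add_one_right_eq_Icc, sum_Ico_eq_sum_range, add_tsub_cancel_right,
    sum_congr rfl hterm, ← mul_sum, sum_range_sub_pow_mul_genocchi]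
  ring

theorem lambda_recurrence_family_second_even (m : ℕ) (hm : 0 < m) (α : ℂ) :
    (-1 : ℂ) ^ m * ((π : ℂ) ^ (2 * m + 2) / (4 * (Nat.factorial (2 * m)))) *
        ((α - 1) ^ (2 * m) + (α + 1) ^ (2 * m) - 2 * α ^ (2 * m)) +
      ∑ k ∈ Finset.Icc 1 m,
        (-1 : ℂ) ^ k * ((α - 1) ^ (2 * k - 1) - (α + 1) ^ (2 * k - 1)) *
          ((π : ℂ) ^ (2 * k) / (Nat.factorial (2 * k - 1))) *
            (dirichletLambda (2 * m - 2 * k + 2) : ℂ) = 0 :=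
  lambda_recurrence_family_second_even_general m α
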